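/- Let G be a connected graph and let G′ be obtained from G by moving an edge e, i.e. contracting e and then expanding a new edge, identified with e, at an arbitrarily chosen vertex. Then an edge set E disconnects G but not G′ if and only if both of the following hold: (1) in G, the set E contains exactly one bond B, and e ∈ B; (2) in G′, there is no bond that contains e and is contained in E. -/

import Mathlib

/-!
A cut of `G` avoiding the moved edge `e` is the same thing as a cut of the common contraction
`G/e = G'/e`, so via `φ` the cuts avoiding `e` in `G` and in `G'` correspond. Hence `φ(E)` fails
to disconnect `G'` exactly when every cut of `G` inside `E` contains `e` and no bond of `G'` inside
`φ(E)` contains `φ e`. In `G`, the first condition (with `E` disconnecting `G`) says that `E`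
contains exactly one bond, and that this bond contains `e`: two distinct bonds `B, B'` inside `E`
would give the cut `B ∆ B'` inside `E`, which misses `e`.
-/
open Classical Finset

noncomputable section

/-- A finite multigraph: edges carry two (possibly equal) endpoints. -/
structure Multigraph where
  V : Type
  E : Type
  [fintV : Fintype V]
  [fintE : Fintype E]
  src : E → V
  tgt : E → V

attribute [instance] Multigraph.fintV Multigraph.fintE

namespace Multigraph

variable (G : Multigraph)

/-- Number of vertices. -/
def nV : ℕ := Fintype.card G.V

/-- Number of edges (with multiplicity). -/
def nE : ℕ := Fintype.card G.E

/-- One step along an edge belonging to the edge set `S`. -/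
def stepOn (S : Finset G.E) (u v : G.V) : Prop :=
  ∃ e ∈ S, (G.src e = u ∧ G.tgt e = v) ∨ (G.src e = v ∧ G.tgt e = u)

/-- The spanning subgraph with edge set `S` is connected. -/
def ConnOn (S : Finset G.E) : Prop :=
  ∀ u v : G.V, Relation.ReflTransGen (G.stepOn S) u v

/-- `G` is connected. -/
def Connected : Prop := G.ConnOn Finset.univ

/-- The edge set `F` disconnects `G` (i.e. is a disconnection). -/
def Disconnects (F : Finset G.E) : Prop := ¬ G.ConnOn (Finset.univ \ F)

/-- `d i G`: the number of `i`-disconnections of `G`. -/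
def d (i : ℕ) : ℕ :=
  ((Finset.univ : Finset (Finset G.E)).filter fun F => F.card = i ∧ G.Disconnects F).card

/-- The all-terminal reliability `R(G,p)`: each edge is independently retained with
probability `p`; this is the probability that the retained spanning subgraph is connected. -/
def rel (p : ℝ) : ℝ :=
  ∑ S : Finset G.E, if G.ConnOn S then p ^ S.card * (1 - p) ^ (G.nE - S.card) else 0

/-- `e` is a bridge. -/
def IsBridge (e : G.E) : Prop := G.Disconnects {e}

def Bridgeless : Prop := ∀ e : G.E, ¬ G.IsBridge e

/-- The number of spanning trees of `G` (connected spanning subgraphs with `nV - 1` edges). -/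
def treeCount : ℕ :=
  ((Finset.univ : Finset (Finset G.E)).filter fun S => S.card + 1 = G.nV ∧ G.ConnOn S).card

/-- The edge-connectivity: the least size of a disconnecting set of edges. -/
def edgeConnectivity : ℕ :=
  sInf {i : ℕ | ∃ F : Finset G.E, F.card = i ∧ G.Disconnects F}

/-- Degree of a vertex (a loop counts twice). -/
def deg (v : G.V) : ℕ :=
  (Finset.univ.filter fun e => G.src e = v).card +
    (Finset.univ.filter fun e => G.tgt e = v).card

/-- The edges crossing the vertex set `A`. -/
def cutEdges (A : Finset G.V) : Finset G.E :=
  Finset.univ.filter fun e =>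
    (G.src e ∈ A ∧ G.tgt e ∉ A) ∨ (G.src e ∉ A ∧ G.tgt e ∈ A)

/-- `F` is a cut: the set of edges crossing a nontrivial bipartition of the vertices. -/
def IsCut (F : Finset G.E) : Prop :=
  ∃ A : Finset G.V, A.Nonempty ∧ A ≠ Finset.univ ∧ F = G.cutEdges A

/-- `F` is a bond: a minimal cut. -/
def IsBond (F : Finset G.E) : Prop :=
  G.IsCut F ∧ ∀ F' ⊆ F, G.IsCut F' → F' = F

/-- Number of `s`-bonds of `G`. -/
def bondCount (s : ℕ) : ℕ :=
  ((Finset.univ : Finset (Finset G.E)).filter fun F => F.card = s ∧ G.IsBond F).card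

/-- Adjacency of vertices. -/
def Adj (u v : G.V) : Prop :=
  ∃ e : G.E, (G.src e = u ∧ G.tgt e = v) ∨ (G.src e = v ∧ G.tgt e = u)

/-- `G` is simple: no loops and no parallel edges. -/
def IsSimple : Prop :=
  (∀ e : G.E, G.src e ≠ G.tgt e) ∧
    ∀ e f : G.E,
      ((G.src e = G.src f ∧ G.tgt e = G.tgt f) ∨ (G.src e = G.tgt f ∧ G.tgt e = G.src f)) →
        e = f

end Multigraph

/-- `G ∈ 𝒢_{n,m}`: connected with `n` vertices and `m` edges. -/
def memG (G : Multigraph) (n m : ℕ) : Prop :=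
  G.nV = n ∧ G.nE = m ∧ G.Connected

/-- Isomorphism of multigraphs. -/
structure MGIso (G H : Multigraph) where
  vMap : G.V ≃ H.V
  eMap : G.E ≃ H.E
  ends_eq : ∀ e : G.E,
    (H.src (eMap e) = vMap (G.src e) ∧ H.tgt (eMap e) = vMap (G.tgt e)) ∨
    (H.src (eMap e) = vMap (G.tgt e) ∧ H.tgt (eMap e) = vMap (G.src e))

def IsIso (G H : Multigraph) : Prop := Nonempty (MGIso G H)

/-- `G` is `p`-optimal in `𝒢_{n,m}`. -/
def pOptimal (G : Multigraph) (n m : ℕ) (p : ℝ) : Prop :=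
  memG G n m ∧ ∀ H : Multigraph, memG H n m → H.rel p ≤ G.rel p

/-- `G` is uniquely optimal in `𝒢_{n,m}`: strictly more reliable than every
non-isomorphic member, for every `p ∈ (0,1)`. -/
def UniquelyOptimal (G : Multigraph) (n m : ℕ) : Prop :=
  memG G n m ∧ ∀ H : Multigraph, memG H n m → ¬ IsIso G H →
    ∀ p : ℝ, 0 < p → p < 1 → H.rel p < G.rel p

noncomputable instance quotFintype {α : Type} [Fintype α] {r : α → α → Prop} :
    Fintype (Quot r) :=
  letI := Classical.decEq (Quot r)
  Fintype.ofSurjective (Quot.mk r) fun q => Quot.exists_rep q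

/-- Identification of the endpoints of zero-weight edges. -/
def zeroRel (D : Multigraph) (w : D.E → ℕ) : D.V → D.V → Prop :=
  fun u v => ∃ e : D.E, w e = 0 ∧ D.src e = u ∧ D.tgt e = v

/-- The `j`-th node along the chain replacing the edge `e` (whose chain has `w e` edges). -/
def chainNode (D : Multigraph) (w : D.E → ℕ) (e : D.E) (j : ℕ) :
    Quot (zeroRel D w) ⊕ (Σ f : D.E, Fin (w f - 1)) :=
  if h : 0 < j ∧ j < w e then Sum.inr ⟨e, ⟨j - 1, by omega⟩⟩
  else if j = 0 then Sum.inl (Quot.mk _ (D.src e))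
  else Sum.inl (Quot.mk _ (D.tgt e))

/-- The weak subdivision of `D` determined by the chain lengths `w`: each edge `e` is
replaced by a chain with `w e` edges; zero-weight edges are contracted. -/
def subdivide (D : Multigraph) (w : D.E → ℕ) : Multigraph where
  V := Quot (zeroRel D w) ⊕ (Σ f : D.E, Fin (w f - 1))
  E := Σ f : D.E, Fin (w f)
  src f := chainNode D w f.1 f.2.val
  tgt f := chainNode D w f.1 (f.2.val + 1)

/-- The zero-weight edges contain no cycle (no "zero cycle"): they form a forest. -/
def ZeroAcyclic (D : Multigraph) (w : D.E → ℕ) : Prop :=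
  Fintype.card (Quot (zeroRel D w)) +
      (Finset.univ.filter fun e : D.E => w e = 0).card = Fintype.card D.V

/-- `G` is a weak subdivision of `D` with chain lengths `w`. -/
def IsWeakSubdivision (G D : Multigraph) (w : D.E → ℕ) : Prop :=
  ZeroAcyclic D w ∧ IsIso G (subdivide D w)

/-- `D` is a weak distillation of `G`. -/
def IsWeakDistillation (D G : Multigraph) : Prop :=
  ∃ w : D.E → ℕ, IsWeakSubdivision G D w

/-- The chain lengths differ pairwise by at most one. -/
def BalancedWeights {E : Type} (w : E → ℕ) : Prop := ∀ e f : E, w e ≤ w f + 1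

/-- `D ∈ 𝒟_k`: connected, cubic, 3-edge-connected, of exceedance `k`. -/
def memDk (k : ℕ) (D : Multigraph) : Prop :=
  D.Connected ∧ (∀ v : D.V, D.deg v = 3) ∧
    (∀ F : Finset D.E, D.Disconnects F → 3 ≤ F.card) ∧ D.nE = D.nV + k

/-- Identification of the two endpoints of the edge `e`. -/
def contractRel (G : Multigraph) (e : G.E) : G.V → G.V → Prop :=
  fun u v => u = G.src e ∧ v = G.tgt e

/-- Contraction of the edge `e`. -/
def Multigraph.contract (G : Multigraph) (e : G.E) : Multigraph :=
  letI := Classical.decEq G.E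
  { V := Quot (contractRel G e)
    E := {f : G.E // f ≠ e}
    src := fun f => Quot.mk _ (G.src f.1)
    tgt := fun f => Quot.mk _ (G.tgt f.1) }

/-- `G'` is obtained from `G` by shifting an edge: in an intermediate graph `H`
(the expansion of `G` at a vertex by the new edge `e'`), the edges `e, e'` form a
2-bond; contracting `e'` gives back `G`, while contracting `e` gives `G'`. -/
def IsShiftOf (G G' : Multigraph) : Prop :=
  ∃ (H : Multigraph) (e e' : H.E), e ≠ e' ∧
    H.src e ≠ H.tgt e ∧ H.src e' ≠ H.tgt e' ∧
    H.IsBond {e, e'} ∧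
    IsIso (H.contract e') G ∧ IsIso (H.contract e) G'

/-- Equivalence of graphs: repeated edge shifting. -/
def EquivalentGraphs (G G' : Multigraph) : Prop :=
  Relation.ReflTransGen IsShiftOf G G'

/-- `G'` is obtained from `G` by moving the (non-loop) edge `e`: contracting `e` and
expanding a new edge, identified with `e` via `φ`, at an arbitrary vertex.
Equivalently, `G/e` and `G'/φ e` agree, compatibly with the edge identification `φ`. -/
def MovedEdge (G G' : Multigraph) (φ : G.E ≃ G'.E) (e : G.E) : Prop :=
  G.src e ≠ G.tgt e ∧ G'.src (φ e) ≠ G'.tgt (φ e) ∧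
  ∃ ψ : Quot (contractRel G e) ≃ Quot (contractRel G' (φ e)),
    ∀ f : G.E, f ≠ e →
      ((ψ (Quot.mk _ (G.src f)) = Quot.mk _ (G'.src (φ f)) ∧
        ψ (Quot.mk _ (G.tgt f)) = Quot.mk _ (G'.tgt (φ f))) ∨
       (ψ (Quot.mk _ (G.src f)) = Quot.mk _ (G'.tgt (φ f)) ∧
        ψ (Quot.mk _ (G.tgt f)) = Quot.mk _ (G'.src (φ f))))

/-- Move one edge from the chain `a` to the chain `b`. -/
def moveWeight {E : Type} (w : E → ℕ) (a b : E) : E → ℕ :=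
  fun g => if g = b then w b + 1 else if g = a then w a - 1 else w g

/-- The chains of maximal length. -/
def maxChains (D : Multigraph) (w : D.E → ℕ) : Finset D.E :=
  Finset.univ.filter fun e => ∀ f : D.E, w f ≤ w e

/-- The chains of minimal length. -/
def minChains (D : Multigraph) (w : D.E → ℕ) : Finset D.E :=
  Finset.univ.filter fun e => ∀ f : D.E, w e ≤ w f

/-- Degree of `v` within the edge set `S`. -/
def degIn (D : Multigraph) (S : Finset D.E) (v : D.V) : ℕ :=
  (S.filter fun e => D.src e = v).card + (S.filter fun e => D.tgt e = v).card

/-- `S` is a matching (pairwise non-adjacent edges). -/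
def IsMatchingIn (D : Multigraph) (S : Finset D.E) : Prop := ∀ v : D.V, degIn D S v ≤ 1

/-- `S` is a path with three edges. -/
def IsPath3In (D : Multigraph) (S : Finset D.E) : Prop :=
  S.card = 3 ∧ (∀ v : D.V, degIn D S v ≤ 2) ∧
    (Finset.univ.filter fun v : D.V => degIn D S v = 1).card = 2

/-- `S` is the disjoint union of a path with three edges and a single edge. -/
def IsPath3PlusEdgeIn (D : Multigraph) (S : Finset D.E) : Prop :=
  S.card = 4 ∧ (∀ v : D.V, degIn D S v ≤ 2) ∧
    (Finset.univ.filter fun v : D.V => degIn D S v = 1).card = 4 ∧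
    ∃ e ∈ S, degIn D S (D.src e) = 2 ∧ degIn D S (D.tgt e) = 2

/-- `S` is the disjoint union of two paths with two edges each. -/
def IsTwoPlusTwoIn (D : Multigraph) (S : Finset D.E) : Prop :=
  S.card = 4 ∧ (∀ v : D.V, degIn D S v ≤ 2) ∧
    (Finset.univ.filter fun v : D.V => degIn D S v = 1).card = 4 ∧
    ∀ e ∈ S, degIn D S (D.src e) = 1 ∨ degIn D S (D.tgt e) = 1

/-- Two edges sharing a vertex. -/
def AdjEdges (D : Multigraph) (a b : D.E) : Prop :=
  ∃ v : D.V, (D.src a = v ∨ D.tgt a = v) ∧ (D.src b = v ∨ D.tgt b = v)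

/-- The number of incidences of edges of weight `c` at the vertex `u`. -/
def incCount (D : Multigraph) (w : D.E → ℕ) (u : D.V) (c : ℕ) : ℕ :=
  (Finset.univ.filter fun e : D.E => D.src e = u ∧ w e = c).card +
    (Finset.univ.filter fun e : D.E => D.tgt e = u ∧ w e = c).card

/-- The `π^v`-value of the vertex `u`: the number of incident edges of weight `q + 1`
minus the number of incident edges of weight `q - 1`. -/
def piV (D : Multigraph) (w : D.E → ℕ) (q : ℕ) (u : D.V) : ℤ :=
  (incCount D w u (q + 1) : ℤ) -
    (if q = 0 then 0 else (incCount D w u (q - 1) : ℤ))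

/-- The `π^v`-values are balanced: pairwise differences at most one. -/
def BalancedPiV (D : Multigraph) (w : D.E → ℕ) (q : ℕ) : Prop :=
  ∀ u v : D.V, piV D w q u ≤ piV D w q v + 1

/-- The standard weight `q`, where `m = 3kq + r` with `-3k/2 < r ≤ 3k/2`. -/
def stdWeight (m k : ℕ) : ℕ := (2 * m + 3 * k - 1) / (6 * k)

/-- `w` is a balanced weighting of `D` of total size `m` (the implied weak
subdivision is the generic member of `ℬ_m(D)`). -/
def IsBalancedWeighting (D : Multigraph) (w : D.E → ℕ) (m : ℕ) : Prop :=
  (∑ e : D.E, w e) = m ∧ BalancedWeights w ∧ ZeroAcyclic D w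

/-- Every 3-bond of `D` is trivial (consists of the three edges at a single vertex). -/
def OnlyTrivialThreeBonds (D : Multigraph) : Prop :=
  ∀ F : Finset D.E, D.IsBond F → F.card = 3 →
    ∃ u : D.V, F = Finset.univ.filter fun e => D.src e = u ∨ D.tgt e = u

/-- The 3-dipole: two vertices joined by three parallel edges. -/
def dipole3 : Multigraph where
  V := Fin 2
  E := Fin 3
  src _ := 0
  tgt _ := 1

/-- The complete graph `K₄`. -/
def K4 : Multigraph where
  V := Fin 4
  E := {p : Fin 4 × Fin 4 // p.1 < p.2}
  src p := p.1.1
  tgt p := p.1.2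

/-- The complete bipartite graph `K_{3,3}`. -/
def K33 : Multigraph where
  V := Fin 3 ⊕ Fin 3
  E := Fin 3 × Fin 3
  src p := Sum.inl p.1
  tgt p := Sum.inr p.2

/-- The triangular prism `Π₃`; the edges `Sum.inr i` are the rungs. -/
def prism : Multigraph where
  V := Fin 3 × Bool
  E := (Fin 3 × Bool) ⊕ Fin 3
  src := fun e => match e with
    | Sum.inl (i, b) => (i, b)
    | Sum.inr i => (i, false)
  tgt := fun e => match e with
    | Sum.inl (i, b) => (i + 1, b)
    | Sum.inr i => (i, true)

/-- The Wagner graph (the 4-Möbius ladder): the edges `Sum.inl i` are the rails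
(the 8-cycle) and the edges `Sum.inr j` are the rungs. -/
def wagner : Multigraph where
  V := Fin 8
  E := Fin 8 ⊕ Fin 4
  src := fun e => match e with
    | Sum.inl i => i
    | Sum.inr j => ⟨j.val, by omega⟩
  tgt := fun e => match e with
    | Sum.inl i => i + 1
    | Sum.inr j => ⟨j.val + 4, by omega⟩

/-- The Petersen graph. -/
def petersen : Multigraph where
  V := Fin 5 × Bool
  E := Fin 5 ⊕ Fin 5 ⊕ Fin 5
  src := fun e => match e with
    | Sum.inl i => (i, false)
    | Sum.inr (Sum.inl i) => (i, false)
    | Sum.inr (Sum.inr i) => (i, true)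
  tgt := fun e => match e with
    | Sum.inl i => (i + 1, false)
    | Sum.inr (Sum.inl i) => (i, true)
    | Sum.inr (Sum.inr i) => (i + 2, true)

open scoped symmDiff

namespace Multigraph

variable {G : Multigraph}

theorem mem_cutEdges {A : Finset G.V} {f : G.E} :
    f ∈ G.cutEdges A ↔ ¬(G.src f ∈ A ↔ G.tgt f ∈ A) := by
  simp only [cutEdges, mem_filter, mem_univ, true_and]
  tauto

theorem cutEdges_symmDiff (A₁ A₂ : Finset G.V) :
    G.cutEdges (A₁ ∆ A₂) = G.cutEdges A₁ ∆ G.cutEdges A₂ := by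
  ext f
  simp only [mem_symmDiff, mem_cutEdges]
  tauto

theorem cutEdges_empty : G.cutEdges ∅ = ∅ := by
  ext f
  simp [mem_cutEdges]

theorem cutEdges_univ : G.cutEdges univ = ∅ := by
  ext f
  simp [mem_cutEdges]

theorem IsCut.symmDiff {C₁ C₂ : Finset G.E} (h₁ : G.IsCut C₁) (h₂ : G.IsCut C₂)
    (hne : C₁ ≠ C₂) : G.IsCut (C₁ ∆ C₂) := by
  obtain ⟨A₁, -, -, rfl⟩ := h₁
  obtain ⟨A₂, -, -, rfl⟩ := h₂
  have hcut := cutEdges_symmDiff A₁ A₂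
  refine ⟨A₁ ∆ A₂, nonempty_iff_ne_empty.2 fun h => hne ?_, fun h => hne ?_, hcut.symm⟩
  · rw [h, cutEdges_empty] at hcut
    exact symmDiff_eq_bot.1 hcut.symm
  · rw [h, cutEdges_univ] at hcut
    exact symmDiff_eq_bot.1 hcut.symm

theorem Disconnects.mono {F F' : Finset G.E} (h : G.Disconnects F) (hF : F ⊆ F') :
    G.Disconnects F' := by
  refine fun hconn => h fun u v => Relation.ReflTransGen.mono ?_ u v (hconn u v)
  rintro _ _ ⟨f, hf, hends⟩
  exact ⟨f, sdiff_subset_sdiff subset_rfl hF hf, hends⟩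

theorem IsCut.disconnects {C : Finset G.E} (h : G.IsCut C) : G.Disconnects C := by
  obtain ⟨A, ⟨a, ha⟩, hA, rfl⟩ := h
  obtain ⟨b, hb⟩ := not_forall.1 (mt eq_univ_iff_forall.2 hA)
  have hclosed : ∀ u v, Relation.ReflTransGen (G.stepOn (univ \ G.cutEdges A)) u v →
      u ∈ A → v ∈ A := by
    intro u v huv hu
    induction huv with
    | refl => exact hu
    | tail _ hstep ih =>
      obtain ⟨f, hf, hends⟩ := hstep
      have hf : G.src f ∈ A ↔ G.tgt f ∈ A :=
        not_not.1 (mem_cutEdges.not.1 (mem_sdiff.1 hf).2)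
      rcases hends with ⟨rfl, rfl⟩ | ⟨rfl, rfl⟩
      exacts [hf.1 ih, hf.2 ih]
  exact fun hconn => hb (hclosed a b (hconn a b) ha)

theorem Disconnects.exists_isCut_subset {F : Finset G.E} (h : G.Disconnects F) :
    ∃ C ⊆ F, G.IsCut C := by
  obtain ⟨u, v, huv⟩ : ∃ u v, ¬Relation.ReflTransGen (G.stepOn (univ \ F)) u v := by
    simpa [Disconnects, ConnOn] using h
  set A := univ.filter fun x => Relation.ReflTransGen (G.stepOn (univ \ F)) u x
  refine ⟨G.cutEdges A, fun f hf => ?_, A, ⟨u, by simp [A, Relation.ReflTransGen.refl]⟩,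
    fun hA => huv (by simpa [A] using (hA.symm ▸ mem_univ v : v ∈ A)), rfl⟩
  by_contra hfF
  have hstep : ∀ x y, (G.src f = x ∧ G.tgt f = y) ∨ (G.src f = y ∧ G.tgt f = x) →
      G.stepOn (univ \ F) x y := fun x y hends => ⟨f, by simpa using hfF, hends⟩
  apply mem_cutEdges.1 hf
  simp only [A, mem_filter, mem_univ, true_and]
  exact ⟨fun h => h.tail (hstep _ _ (.inl ⟨rfl, rfl⟩)),
    fun h => h.tail (hstep _ _ (.inr ⟨rfl, rfl⟩))⟩

theorem IsCut.exists_isBond_subset {C : Finset G.E} (h : G.IsCut C) :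
    ∃ B ⊆ C, G.IsBond B := by
  obtain ⟨B, hBC, hB⟩ := exists_minimal_le_of_wellFoundedLT G.IsCut C h
  exact ⟨B, hBC, hB.prop, fun B' hB'B hB' => le_antisymm hB'B (hB.le_of_le hB' hB'B)⟩

theorem disconnects_iff_exists_isBond_subset {F : Finset G.E} :
    G.Disconnects F ↔ ∃ B ⊆ F, G.IsBond B := by
  refine ⟨fun h => ?_, fun ⟨B, hBF, hB⟩ => hB.1.disconnects.mono hBF⟩
  obtain ⟨C, hCF, hC⟩ := h.exists_isCut_subset
  obtain ⟨B, hBC, hB⟩ := hC.exists_isBond_subset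
  exact ⟨B, hBC.trans hCF, hB⟩

theorem disconnects_iff_exists_isCut_notMem_or_isBond_mem (F : Finset G.E) (x : G.E) :
    G.Disconnects F ↔
      (∃ C ⊆ F, G.IsCut C ∧ x ∉ C) ∨ ∃ B ⊆ F, G.IsBond B ∧ x ∈ B := by
  constructor
  · intro h
    obtain ⟨B, hBF, hB⟩ := disconnects_iff_exists_isBond_subset.1 h
    by_cases hx : x ∈ B
    exacts [.inr ⟨B, hBF, hB, hx⟩, .inl ⟨B, hBF, hB.1, hx⟩]
  · rintro (⟨C, hCF, hC, -⟩ | ⟨B, hBF, hB, -⟩)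
    exacts [hC.disconnects.mono hCF, hB.1.disconnects.mono hBF]

theorem disconnects_and_forall_isCut_mem_iff (F : Finset G.E) (x : G.E) :
    (G.Disconnects F ∧ ∀ C ⊆ F, G.IsCut C → x ∈ C) ↔
      ∃ B ⊆ F, G.IsBond B ∧ x ∈ B ∧ ∀ B' ⊆ F, G.IsBond B' → B' = B := by
  constructor
  · rintro ⟨hF, hx⟩
    obtain ⟨B, hBF, hB⟩ := disconnects_iff_exists_isBond_subset.1 hF
    refine ⟨B, hBF, hB, hx B hBF hB.1, fun B' hB'F hB' => by_contra fun hne => ?_⟩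
    have hsub : B' ∆ B ⊆ F := symmDiff_le (le_sup_of_le_right hB'F) (le_sup_of_le_right hBF)
    have := hx _ hsub (hB'.1.symmDiff hB.1 hne)
    simp only [mem_symmDiff, hx B' hB'F hB'.1, hx B hBF hB.1] at this
    tauto
  · rintro ⟨B, hBF, hB, hxB, huniq⟩
    refine ⟨hB.1.disconnects.mono hBF, fun C hCF hC => ?_⟩
    obtain ⟨B', hB'C, hB'⟩ := hC.exists_isBond_subset
    exact hB'C (huniq B' (hB'C.trans hCF) hB' ▸ hxB)

/-- The vertex set of `G` lying over the vertex set `P` of the contraction `G/e`. -/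
def preimageContract (e : G.E) (P : Set (Quot (contractRel G e))) : Finset G.V :=
  univ.filter fun v => Quot.mk _ v ∈ P

theorem mem_cutEdges_preimageContract {e f : G.E} {P : Set (Quot (contractRel G e))} :
    f ∈ G.cutEdges (G.preimageContract e P) ↔
      ¬(Quot.mk _ (G.src f) ∈ P ↔ Quot.mk _ (G.tgt f) ∈ P) := by
  simp [mem_cutEdges, preimageContract]

theorem notMem_cutEdges_preimageContract (e : G.E) (P : Set (Quot (contractRel G e))) :
    e ∉ G.cutEdges (G.preimageContract e P) := by
  have hends : Quot.mk (contractRel G e) (G.src e) = Quot.mk _ (G.tgt e) :=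
    Quot.sound ⟨rfl, rfl⟩
  rw [mem_cutEdges_preimageContract, hends]
  exact not_not.2 Iff.rfl

theorem isCut_and_notMem_iff {e : G.E} {C : Finset G.E} :
    G.IsCut C ∧ e ∉ C ↔ ∃ P : Set (Quot (contractRel G e)),
      P.Nonempty ∧ P ≠ Set.univ ∧ C = G.cutEdges (G.preimageContract e P) := by
  constructor
  · rintro ⟨⟨A, ⟨a, ha⟩, hA, rfl⟩, he⟩
    have hAe : G.src e ∈ A ↔ G.tgt e ∈ A := not_not.1 (mem_cutEdges.not.1 he)
    let P : Set (Quot (contractRel G e)) :=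
      {x | Quot.lift (· ∈ A) (fun _ _ ⟨hu, hv⟩ => hu ▸ hv ▸ propext hAe) x}
    have hPA : G.preimageContract e P = A := by
      ext v
      simp [preimageContract, P]
    obtain ⟨b, hb⟩ := not_forall.1 (mt eq_univ_iff_forall.2 hA)
    refine ⟨P, ⟨Quot.mk _ a, ha⟩, fun hP => hb ?_, by rw [hPA]⟩
    exact (hP ▸ Set.mem_univ (Quot.mk _ b) : Quot.mk _ b ∈ P)
  · rintro ⟨P, ⟨x, hx⟩, hP, rfl⟩
    refine ⟨⟨_, ?_, fun h => ?_, rfl⟩, notMem_cutEdges_preimageContract e P⟩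
    · obtain ⟨a, rfl⟩ := Quot.exists_rep x
      exact ⟨a, by simpa [preimageContract] using hx⟩
    · obtain ⟨y, hy⟩ := not_forall.1 (mt Set.eq_univ_iff_forall.2 hP)
      obtain ⟨b, rfl⟩ := Quot.exists_rep y
      have hb : b ∈ G.preimageContract e P := h ▸ mem_univ b
      exact hy (by simpa [preimageContract] using hb)

end Multigraph

namespace MovedEdge

open Multigraph

variable {G G' : Multigraph} {φ : G.E ≃ G'.E} {e : G.E}

theorem symm (h : MovedEdge G G' φ e) : MovedEdge G' G φ.symm (φ e) := by
  obtain ⟨hG, hG', ψ, hψ⟩ := h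
  rw [MovedEdge, φ.symm_apply_apply]
  refine ⟨hG', hG, ψ.symm, fun f' hf' => ?_⟩
  obtain ⟨f, rfl⟩ := φ.surjective f'
  rw [φ.symm_apply_apply]
  rcases hψ f (fun h => hf' (h ▸ rfl)) with ⟨hs, ht⟩ | ⟨hs, ht⟩
  · exact .inl ⟨ψ.symm_apply_eq.2 hs.symm, ψ.symm_apply_eq.2 ht.symm⟩
  · exact .inr ⟨ψ.symm_apply_eq.2 ht.symm, ψ.symm_apply_eq.2 hs.symm⟩

theorem isCut_image (h : MovedEdge G G' φ e) {C : Finset G.E} (hC : G.IsCut C) (he : e ∉ C) :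
    G'.IsCut (C.image φ) := by
  obtain ⟨-, -, ψ, hψ⟩ := h
  obtain ⟨P, hP, hPuniv, rfl⟩ := isCut_and_notMem_iff.1 ⟨hC, he⟩
  refine (isCut_and_notMem_iff (e := φ e)).2 ⟨ψ.symm ⁻¹' P,
    ψ.symm.surjective.nonempty_preimage.2 hP,
    fun hP' => hPuniv <|
      ψ.symm.surjective.preimage_injective (hP'.trans Set.preimage_univ.symm),
    ?_⟩ |>.1
  ext f'
  obtain ⟨f, rfl⟩ := φ.surjective f'
  rw [φ.injective.mem_finset_image]
  by_cases hf : f = e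
  · subst hf
    exact iff_of_false (notMem_cutEdges_preimageContract _ _)
      (notMem_cutEdges_preimageContract _ _)
  rw [mem_cutEdges_preimageContract, mem_cutEdges_preimageContract, Set.mem_preimage,
    Set.mem_preimage]
  rcases hψ f hf with ⟨hs, ht⟩ | ⟨hs, ht⟩
  · rw [← hs, ← ht, ψ.symm_apply_apply, ψ.symm_apply_apply]
  · rw [← hs, ← ht, ψ.symm_apply_apply, ψ.symm_apply_apply]
    exact not_congr Iff.comm

theorem exists_isCut_notMem_image_iff (h : MovedEdge G G' φ e) (E : Finset G.E) :
    (∃ C' ⊆ E.image φ, G'.IsCut C' ∧ φ e ∉ C') ↔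
      ∃ C ⊆ E, G.IsCut C ∧ e ∉ C := by
  constructor
  · rintro ⟨C', hC'E, hC', he⟩
    refine ⟨C'.image φ.symm, ?_, h.symm.isCut_image hC' he, ?_⟩
    · simpa [image_image] using image_subset_image (f := φ.symm) hC'E
    · rwa [← φ.symm_apply_apply e, φ.symm.injective.mem_finset_image]
  · rintro ⟨C, hCE, hC, he⟩
    exact ⟨C.image φ, image_subset_image hCE, h.isCut_image hC he,
      by rwa [φ.injective.mem_finset_image]⟩

theorem not_disconnects_image_iff (h : MovedEdge G G' φ e) (E : Finset G.E) :
    ¬G'.Disconnects (E.image φ) ↔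
      (∀ C ⊆ E, G.IsCut C → e ∈ C) ∧
        ¬∃ B' ⊆ E.image φ, G'.IsBond B' ∧ φ e ∈ B' := by
  rw [disconnects_iff_exists_isCut_notMem_or_isBond_mem _ (φ e),
    h.exists_isCut_notMem_image_iff, not_or]
  simp only [not_exists, not_and, not_not]

end MovedEdge

theorem moved_edge_disconnection_criterion_general (G G' : Multigraph)
    (φ : G.E ≃ G'.E) (e : G.E) (hmove : MovedEdge G G' φ e) (E : Finset G.E) :
    (G.Disconnects E ∧ ¬ G'.Disconnects (E.image φ)) ↔
      ((∃ B ⊆ E, G.IsBond B ∧ e ∈ B ∧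
          ∀ B' ⊆ E, G.IsBond B' → B' = B) ∧
       ¬ ∃ B' ⊆ E.image φ, G'.IsBond B' ∧ φ e ∈ B') := by
  rw [hmove.not_disconnects_image_iff, ← and_assoc,
    Multigraph.disconnects_and_forall_isCut_mem_iff]

/-- if G' is obtained from the connected graph G by moving the edge e,
then an edge set E disconnects G but not G' iff (1) E contains exactly one bond B of G
and e ∈ B, and (2) no bond of G' containing e is contained in E. -/
theorem moved_edge_disconnection_criterion (G G' : Multigraph) (hG : G.Connected)
    (φ : G.E ≃ G'.E) (e : G.E) (hmove : MovedEdge G G' φ e) (E : Finset G.E) :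
    (G.Disconnects E ∧ ¬ G'.Disconnects (E.image φ)) ↔
      ((∃ B ⊆ E, G.IsBond B ∧ e ∈ B ∧
          ∀ B' ⊆ E, G.IsBond B' → B' = B) ∧
       ¬ ∃ B' ⊆ E.image φ, G'.IsBond B' ∧ φ e ∈ B') :=
  moved_edge_disconnection_criterion_general G G' φ e hmove E
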